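/- For the equality-constrained instance W = 1000, w = (400, 375, 350, 275), q = Q = (1, 1, 1, 300): in every waste-minimal feasible solution, the order of size 275 appears in every pattern used. In particular, one order appears in every pattern of the optimal solution. -/
import Mathlib


/-- A pattern for master size 1000 with sizes (400, 375, 350, 275). -/
def ValidPattern (a : Fin 4 → ℕ) : Prop :=
  400 * a 0 + 375 * a 1 + 350 * a 2 + 275 * a 3 ≤ 1000

/-- Equality-constrained feasibility for demands (1, 1, 1, 300). -/
def Feasible (x : (Fin 4 → ℕ) →₀ ℕ) : Prop :=
  (∀ a ∈ x.support, ValidPattern a) ∧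
  x.sum (fun a c => c * a 0) = 1 ∧
  x.sum (fun a c => c * a 1) = 1 ∧
  x.sum (fun a c => c * a 2) = 1 ∧
  x.sum (fun a c => c * a 3) = 300

/-- Total waste of a solution. -/
def waste (x : (Fin 4 → ℕ) →₀ ℕ) : ℕ :=
  x.sum (fun a c => c * (1000 - (400 * a 0 + 375 * a 1 + 350 * a 2 + 275 * a 3)))

/-! ### Auxiliary material -/

/-- Witness patterns. -/
def pat1 : Fin 4 → ℕ := ![1, 0, 0, 2]
def pat2 : Fin 4 → ℕ := ![0, 1, 1, 1]
def pat3 : Fin 4 → ℕ := ![0, 0, 0, 3]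

/-- Explicit optimal solution: 101 masters. -/
noncomputable def ywit : (Fin 4 → ℕ) →₀ ℕ :=
  Finsupp.single pat1 1 + Finsupp.single pat2 1 + Finsupp.single pat3 99

lemma ywit_sum (g : (Fin 4 → ℕ) → ℕ) :
    ywit.sum (fun a c => c * g a) = 1 * g pat1 + 1 * g pat2 + 99 * g pat3 := by
  unfold ywit
  rw [Finsupp.sum_add_index' (by intro a; ring) (by intro a b c; ring),
      Finsupp.sum_add_index' (by intro a; ring) (by intro a b c; ring),
      Finsupp.sum_single_index (by ring), Finsupp.sum_single_index (by ring),
      Finsupp.sum_single_index (by ring)]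

lemma pat_ne12 : pat1 ≠ pat2 := by
  intro h; have := congrFun h 0; simp [pat1, pat2] at this

lemma ywit_feasible : Feasible ywit := by
  refine ⟨?_, ?_, ?_, ?_, ?_⟩
  · intro a ha
    have h1 : ywit.support ⊆ {pat1, pat2, pat3} := by
      refine Finsupp.support_add.trans ?_
      refine Finset.union_subset (Finsupp.support_add.trans (Finset.union_subset ?_ ?_)) ?_
      · exact Finsupp.support_single_subset.trans (by intro b hb; simp_all)
      · exact Finsupp.support_single_subset.trans (by intro b hb; simp_all)
      · exact Finsupp.support_single_subset.trans (by intro b hb; simp_all)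
    have := h1 ha
    simp only [Finset.mem_insert, Finset.mem_singleton] at this
    rcases this with h | h | h <;> subst h <;> unfold ValidPattern <;> decide
  · rw [ywit_sum]; decide
  · rw [ywit_sum]; decide
  · rw [ywit_sum]; decide
  · rw [ywit_sum]; decide

lemma ywit_count : ywit.sum (fun _ c => c) = 101 := by
  have := ywit_sum (fun _ => 1)
  simpa using this

/-- The waste identity: waste plus total demanded material equals 1000 × number of masters. -/
lemma waste_add_eq (x : (Fin 4 → ℕ) →₀ ℕ) (hx : Feasible x) :
    waste x + 83625 = 1000 * x.sum (fun _ c => c) := by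
  obtain ⟨hv, h0, h1, h2, h3⟩ := hx
  unfold waste Finsupp.sum at *
  have key : ∀ a ∈ x.support,
      x a * (1000 - (400 * a 0 + 375 * a 1 + 350 * a 2 + 275 * a 3))
        + (400 * (x a * a 0) + 375 * (x a * a 1) + 350 * (x a * a 2) + 275 * (x a * a 3))
      = x a * 1000 := by
    intro a ha
    have := hv a ha
    unfold ValidPattern at this
    have e : 400 * (x a * a 0) + 375 * (x a * a 1) + 350 * (x a * a 2) + 275 * (x a * a 3)
        = x a * (400 * a 0 + 375 * a 1 + 350 * a 2 + 275 * a 3) := by ring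
    rw [e, ← Nat.mul_add, Nat.sub_add_cancel this]
  have hsum : ∑ a ∈ x.support, (x a * (1000 - (400 * a 0 + 375 * a 1 + 350 * a 2 + 275 * a 3))
        + (400 * (x a * a 0) + 375 * (x a * a 1) + 350 * (x a * a 2) + 275 * (x a * a 3)))
      = ∑ a ∈ x.support, x a * 1000 := Finset.sum_congr rfl key
  rw [Finset.sum_add_distrib] at hsum
  have hexp : ∑ a ∈ x.support,
      (400 * (x a * a 0) + 375 * (x a * a 1) + 350 * (x a * a 2) + 275 * (x a * a 3)) = 83625 := by
    rw [Finset.sum_add_distrib, Finset.sum_add_distrib, Finset.sum_add_distrib,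
        ← Finset.mul_sum, ← Finset.mul_sum, ← Finset.mul_sum, ← Finset.mul_sum,
        h0, h1, h2, h3]
    norm_num
  rw [hexp] at hsum
  rw [hsum, Finset.mul_sum]
  exact Finset.sum_congr rfl (fun a _ => Nat.mul_comm _ _)

lemma valid_b3 (b : Fin 4 → ℕ) (h : ValidPattern b) : b 3 ≤ 3 := by
  unfold ValidPattern at h; omega

lemma valid_bzero (b : Fin 4 → ℕ) (h : ValidPattern b) (h3 : b 3 = 3) :
    b 0 = 0 ∧ b 1 = 0 ∧ b 2 = 0 := by
  unfold ValidPattern at h; rw [h3] at h; omega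

/-- for W = 1000, w = (400, 375, 350, 275), q = Q = (1, 1, 1, 300),
in every waste-minimal feasible solution the order of size 275 appears in every
pattern used. -/
theorem stmt8 :
    ∀ x, Feasible x → (∀ y, Feasible y → waste x ≤ waste y) →
      ∀ a ∈ x.support, 0 < a 3 := by
  intro x hx hmin a ha
  by_contra hcon
  have ha3 : a 3 = 0 := by omega
  obtain ⟨hv, h0, h1, h2, h3⟩ := hx
  -- the number of masters is at most 101
  have hN : x.sum (fun _ c => c) ≤ 101 := by
    have hle := hmin ywit ywit_feasible
    have e1 := waste_add_eq x ⟨hv, h0, h1, h2, h3⟩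
    have e2 := waste_add_eq ywit ywit_feasible
    rw [ywit_count] at e2
    clear h0 h1 h2 h3
    omega
  classical
  set T0 : Finset (Fin 4 → ℕ) := x.support.filter (fun b => b 3 = 0) with hT0
  set T : Finset (Fin 4 → ℕ) := x.support.filter (fun b => ¬ b 3 = 0) with hT
  have hsplit : ∀ (f : (Fin 4 → ℕ) → ℕ),
      ∑ b ∈ T0, f b + ∑ b ∈ T, f b = ∑ b ∈ x.support, f b := fun f =>
    Finset.sum_filter_add_sum_filter_not x.support (fun b => b 3 = 0) f
  have haT0 : a ∈ T0 := Finset.mem_filter.mpr ⟨ha, ha3⟩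
  have hb3 : ∀ b ∈ T, b 3 ≤ 3 := fun b hb =>
    valid_b3 b (hv b (Finset.mem_filter.mp hb).1)
  -- the 300 pieces of 275 all sit in patterns of T
  have h3' : ∑ b ∈ T, x b * b 3 = 300 := by
    simp only [Finsupp.sum] at h3
    rw [← hsplit (fun b => x b * b 3)] at h3
    have hz : ∑ b ∈ T0, x b * b 3 = 0 :=
      Finset.sum_eq_zero (fun b hb => by
        rw [(Finset.mem_filter.mp hb).2, Nat.mul_zero])
    rw [hz, Nat.zero_add] at h3
    exact h3
  have hTle : ∑ b ∈ T, x b * b 3 ≤ ∑ b ∈ T, x b * 3 :=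
    Finset.sum_le_sum (fun b hb => Nat.mul_le_mul_left _ (hb3 b hb))
  have hT3sum : ∑ b ∈ T, x b * 3 = 3 * ∑ b ∈ T, x b := by
    rw [Finset.mul_sum]; exact Finset.sum_congr rfl (fun b _ => Nat.mul_comm _ _)
  -- clean inequality: 300 ≤ 3·(number of masters in T)
  have h300 : 300 ≤ 3 * ∑ b ∈ T, x b := by rw [← h3', ← hT3sum]; exact hTle
  have hNsum : ∑ b ∈ T0, x b + ∑ b ∈ T, x b = x.sum (fun _ c => c) := by
    simp only [Finsupp.sum]; exact hsplit _
  have hxa : 1 ≤ x a := Nat.one_le_iff_ne_zero.mpr (Finsupp.mem_support_iff.mp ha)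
  have hm0 : x a ≤ ∑ b ∈ T0, x b :=
    Finset.single_le_sum (fun i _ => Nat.zero_le _) haT0
  -- forcing the equalities
  have hm0eq : ∑ b ∈ T0, x b = 1 := by
    clear h0 h1 h2 h3 h3' hTle hT3sum
    omega
  have hmT : ∑ b ∈ T, x b = 100 := by
    clear h0 h1 h2 h3 h3' hTle hT3sum
    omega
  have heq : ∑ b ∈ T, x b * b 3 = ∑ b ∈ T, x b * 3 := by
    rw [h3', hT3sum, hmT]
  have hb3eq : ∀ b ∈ T, b 3 = 3 := by
    intro b hb
    have hterm := (Finset.sum_eq_sum_iff_of_le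
      (fun i hi => Nat.mul_le_mul_left _ (hb3 i hi))).mp heq b hb
    have hxb : x b ≠ 0 := Finsupp.mem_support_iff.mp (Finset.mem_filter.mp hb).1
    exact Nat.eq_of_mul_eq_mul_left (Nat.pos_of_ne_zero hxb) hterm
  have hbzero : ∀ b ∈ T, b 0 = 0 ∧ b 1 = 0 ∧ b 2 = 0 := fun b hb =>
    valid_bzero b (hv b (Finset.mem_filter.mp hb).1) (hb3eq b hb)
  -- T0 = {a}
  have hT0a : ∀ b ∈ T0, b = a := by
    intro b hb
    by_contra hne
    have hsub : ({a, b} : Finset (Fin 4 → ℕ)) ⊆ T0 := by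
      intro c hc
      rcases Finset.mem_insert.mp hc with h | h
      · exact h ▸ haT0
      · exact (Finset.mem_singleton.mp h) ▸ hb
    have hpair : x a + x b = ∑ c ∈ ({a, b} : Finset (Fin 4 → ℕ)), x c :=
      (Finset.sum_pair (fun h => hne h.symm)).symm
    have hle2 : ∑ c ∈ ({a, b} : Finset (Fin 4 → ℕ)), x c ≤ ∑ b ∈ T0, x b :=
      Finset.sum_le_sum_of_subset hsub
    have hxb : 1 ≤ x b :=
      Nat.one_le_iff_ne_zero.mpr (Finsupp.mem_support_iff.mp (Finset.mem_filter.mp hb).1)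
    clear h0 h1 h2 h3 h3' hTle hT3sum heq
    omega
  have hT0sing : T0 = {a} :=
    Finset.eq_singleton_iff_unique_mem.mpr ⟨haT0, hT0a⟩
  -- coordinates of a
  have hcoord : ∀ (i : Fin 4), (∀ b ∈ T, b i = 0) → x.sum (fun b c => c * b i) = 1 →
      x a * a i = 1 := by
    intro i hz0 hsum
    simp only [Finsupp.sum] at hsum
    rw [← hsplit (fun b => x b * b i)] at hsum
    have hz : ∑ b ∈ T, x b * b i = 0 :=
      Finset.sum_eq_zero (fun b hb => by rw [hz0 b hb, Nat.mul_zero])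
    rw [hz, Nat.add_zero, hT0sing, Finset.sum_singleton] at hsum
    exact hsum
  have ha0 : a 0 = 1 :=
    Nat.eq_one_of_mul_eq_one_left (hcoord 0 (fun b hb => (hbzero b hb).1) h0)
  have ha1 : a 1 = 1 :=
    Nat.eq_one_of_mul_eq_one_left (hcoord 1 (fun b hb => (hbzero b hb).2.1) h1)
  have ha2 : a 2 = 1 :=
    Nat.eq_one_of_mul_eq_one_left (hcoord 2 (fun b hb => (hbzero b hb).2.2) h2)
  have hav := hv a ha
  unfold ValidPattern at hav
  rw [ha0, ha1, ha2, ha3] at hav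
  exact absurd hav (by norm_num)
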